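/- arXiv:1604.08149 — 8 statements merged into one kernel-verified Lean document; each statement's English description precedes it below -/
import Mathlib

section
/- Let P be a finite poset and B a nonempty subset of P. Define a binary relation ≤' on the quotient set P/B = (P \ B) ⊔ {B} by: x ≤' y iff either x = {B} and there exists x' ∈ B with x' ≤ y; or y = {B} and there exists y' ∈ B with x ≤ y'; or x, y ∈ P \ B and x ≤ y; or x, y ∈ P \ B and there exist b, b' ∈ B with x ≤ b and b' ≤ y. Then ≤' is a partial order on P/B if and only if B is convex in P. -/
/-!
Transitivity of `≤'` holds for every `B`: a chain that passes through the class `{B}` can be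
rerouted through elements of `B`. Convexity is exactly antisymmetry at the new point: `{B} ≤' x`
and `x ≤' {B}` say that `x ∉ B` lies between two elements of `B`, and every other failure of
antisymmetry produces such a sandwich by transitivity.
-/

/-- The relation `≤'` on the quotient set `P/B = (P \ B) ⊔ {B}`, where `none`
represents the collapsed class `{B}` and `some x` an element of `P \ B`. -/
def quotLE {α : Type*} [PartialOrder α] (B : Set α) :
    Option {x : α // x ∉ B} → Option {x : α // x ∉ B} → Prop
  | none, none => True
  | none, some y => ∃ x' ∈ B, x' ≤ y.1
  | some x, none => ∃ y' ∈ B, x.1 ≤ y'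
  | some x, some y => x.1 ≤ y.1 ∨ ∃ b ∈ B, ∃ b' ∈ B, x.1 ≤ b ∧ b' ≤ y.1

section QuotLE

variable {α : Type*} [PartialOrder α] {B : Set α}

theorem quotLE_refl : ∀ x, quotLE B x x
  | none => trivial
  | some _ => Or.inl le_rfl

theorem quotLE_trans (x y z : Option {x : α // x ∉ B}) :
    quotLE B x y → quotLE B y z → quotLE B x z := by
  rcases x with _ | x <;> rcases y with _ | y <;> rcases z with _ | z <;> intro hxy hyz <;>
    try trivial
  · obtain ⟨a, ha, hay⟩ := hxy
    rcases hyz with hyz | ⟨-, -, b', hb', -, hb'z⟩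
    · exact ⟨a, ha, hay.trans hyz⟩
    · exact ⟨b', hb', hb'z⟩
  · obtain ⟨a, ha, hxa⟩ := hxy
    obtain ⟨b, hb, hbz⟩ := hyz
    exact Or.inr ⟨a, ha, b, hb, hxa, hbz⟩
  · obtain ⟨c, hc, hyc⟩ := hyz
    rcases hxy with hxy | ⟨b, hb, -, -, hxb, -⟩
    · exact ⟨c, hc, hxy.trans hyc⟩
    · exact ⟨b, hb, hxb⟩
  · rcases hxy with hxy | ⟨b, hb, b', hb', hxb, hb'y⟩ <;>
      rcases hyz with hyz | ⟨c, hc, c', hc', hyc, hc'z⟩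
    · exact Or.inl (hxy.trans hyz)
    · exact Or.inr ⟨c, hc, c', hc', hxy.trans hyc, hc'z⟩
    · exact Or.inr ⟨b, hb, b', hb', hxb, hb'y.trans hyz⟩
    · exact Or.inr ⟨b, hb, c', hc', hxb, hc'z⟩

theorem Set.OrdConnected.not_quotLE_some_none (hB : B.OrdConnected) {x : {x : α // x ∉ B}}
    (h : quotLE B none (some x)) : ¬ quotLE B (some x) none := by
  obtain ⟨a, ha, hax⟩ := h
  rintro ⟨b, hb, hxb⟩
  exact x.2 (hB.out ha hb ⟨hax, hxb⟩)

theorem Set.OrdConnected.quotLE_antisymm (hB : B.OrdConnected) (x y : Option {x : α // x ∉ B})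
    (hxy : quotLE B x y) (hyx : quotLE B y x) : x = y := by
  rcases x with _ | x <;> rcases y with _ | y
  · rfl
  · exact (hB.not_quotLE_some_none hxy hyx).elim
  · exact (hB.not_quotLE_some_none hyx hxy).elim
  rcases hxy with hxy | ⟨b, hb, b', hb', hxb, hb'y⟩
  · rcases hyx with hyx | ⟨c, hc, c', hc', hyc, hc'x⟩
    · exact congrArg some (Subtype.ext (le_antisymm hxy hyx))
    · exact (hB.not_quotLE_some_none (x := y) ⟨c', hc', hc'x.trans hxy⟩ ⟨c, hc, hyc⟩).elim
  · have hx : quotLE B none (some x) := quotLE_trans none (some y) _ ⟨b', hb', hb'y⟩ hyx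
    exact (hB.not_quotLE_some_none hx ⟨b, hb, hxb⟩).elim

theorem ordConnected_of_quotLE_antisymm
    (h : ∀ x y : Option {x : α // x ∉ B}, quotLE B x y → quotLE B y x → x = y) :
    B.OrdConnected := by
  refine ⟨fun a ha b hb z ⟨haz, hzb⟩ => ?_⟩
  by_contra hz
  exact Option.some_ne_none _ (h (some ⟨z, hz⟩) none ⟨b, hb, hzb⟩ ⟨a, ha, haz⟩)

theorem isPartialOrder_quotLE_iff_ordConnected : IsPartialOrder _ (quotLE B) ↔ B.OrdConnected :=
  ⟨fun h => ordConnected_of_quotLE_antisymm h.antisymm,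
    fun hB => { refl := quotLE_refl, trans := quotLE_trans, antisymm := hB.quotLE_antisymm }⟩

end QuotLE

theorem stmt0_general {α : Type*} [PartialOrder α] (B : Set α) :
    IsPartialOrder _ (quotLE B) ↔ ∀ x ∈ B, ∀ y ∈ B, ∀ z, x ≤ z → z ≤ y → z ∈ B := by
  rw [isPartialOrder_quotLE_iff_ordConnected, Set.ordConnected_def]
  exact forall₂_congr fun x _ => forall₂_congr fun y _ => ⟨fun h z hxz hzy => h ⟨hxz, hzy⟩,
    fun h z hz => h z hz.1 hz.2⟩

/-- The relation `≤'` on `P/B` is a partial order iff `B` is convex. -/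
theorem stmt0 {α : Type*} [Fintype α] [PartialOrder α] (B : Set α) (hB : B.Nonempty) :
    IsPartialOrder _ (quotLE B) ↔ ∀ x ∈ B, ∀ y ∈ B, ∀ z, x ≤ z → z ≤ y → z ∈ B :=
  stmt0_general B
end

section
/- Let E be a set, ∼ an equivalence relation on E, ≈ an equivalence relation finer than ∼, and ≃ the induced equivalence relation on E/≈ (so that E/∼ ≅ (E/≈)/≃). Let R be a partial order on E/∼, S a partial order on E/≈, T the partial order on E/≈ obtained by saturation from R and S, S' a partial order on E, S'' the partial order on E obtained by saturation from S and S', and T' the partial order on E obtained by saturation from T and S'. Then T' equals the partial order on E obtained by saturation from R and S''. -/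
/-- Saturation of a relation `R` on a quotient (along the projection `π`)
with a relation `S` on the underlying set. -/
def sat {E Q : Type*} (π : E → Q) (R : Q → Q → Prop) (S : E → E → Prop) : E → E → Prop :=
  fun e e' => (π e ≠ π e' ∧ R (π e) (π e')) ∨ (π e = π e' ∧ S e e')

theorem sat_sat_eq_sat_comp {E Q₁ Q₂ : Type*} (π : E → Q₁) (p : Q₁ → Q₂)
    (R : Q₂ → Q₂ → Prop) (S : Q₁ → Q₁ → Prop) (S' : E → E → Prop) :
    sat π (sat p R S) S' = sat (p ∘ π) R (sat π S S') := by
  funext e e'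
  have hp : π e = π e' → p (π e) = p (π e') := congrArg p
  simp only [sat, Function.comp_apply, eq_iff_iff]
  tauto

theorem stmt2_general {E : Type*} (apx sim : Setoid E)
    (hfine : ∀ e e', apx.r e e' → sim.r e e')
    (R : Quotient sim → Quotient sim → Prop)
    (S : Quotient apx → Quotient apx → Prop)
    (S' : E → E → Prop) :
    sat (Quotient.mk apx)
      (sat (Quotient.lift (Quotient.mk sim) (fun a b h => Quotient.sound (hfine a b h))) R S)
      S'
    = sat (Quotient.mk sim) R (sat (Quotient.mk apx) S S') :=
  -- `Quotient.mk sim` is definitionally the lift composed with `Quotient.mk apx`.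
  sat_sat_eq_sat_comp _ _ R S S'

/-- Saturation by stages: saturating `T` (obtained from `R` and `S`) with `S'`
gives the same relation as saturating `R` with `S''` (obtained from `S` and `S'`). -/
theorem stmt2 {E : Type*} (apx sim : Setoid E)
    (hfine : ∀ e e', apx.r e e' → sim.r e e')
    (R : Quotient sim → Quotient sim → Prop)
    (S : Quotient apx → Quotient apx → Prop)
    (S' : E → E → Prop)
    (hR : IsPartialOrder _ R) (hS : IsPartialOrder _ S) (hS' : IsPartialOrder _ S') :
    sat (Quotient.mk apx)
      (sat (Quotient.lift (Quotient.mk sim) (fun a b h => Quotient.sound (hfine a b h))) R S)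
      S'
    = sat (Quotient.mk sim) R (sat (Quotient.mk apx) S S') :=
  stmt2_general apx sim hfine R S S'
end

section
/- The partial compositions •_a on finite posets satisfy nested associativity: for finite posets A, B, C with a ∈ A and b ∈ B, (A •_a B) •_b C = A •_a (B •_b C) as posets on (A \ {a}) ⊔ (B \ {b}) ⊔ C. -/
/-- The relation of `A •_a B` on `(A \ {a}) ⊔ B`. -/
def bcomp {α β : Type*} (lA : α → α → Prop) (lB : β → β → Prop) (a : α) :
    ({x : α // x ≠ a} ⊕ β) → ({x : α // x ≠ a} ⊕ β) → Prop
  | .inl x, .inl y => lA x.1 y.1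
  | .inr x, .inr y => lB x y
  | .inl x, .inr _ => lA x.1 a
  | .inr _, .inl y => lA a y.1

/-- The canonical identification of the underlying set of `(A •_a B) •_b C`
with that of `A •_a (B •_b C)`. -/
def nestMap {α β γ : Type*} (a : α) (b : β) :
    ({x : {x : α // x ≠ a} ⊕ β // x ≠ Sum.inr b} ⊕ γ) →
      ({x : α // x ≠ a} ⊕ ({y : β // y ≠ b} ⊕ γ))
  | .inl ⟨.inl x, _⟩ => .inl x
  | .inl ⟨.inr y, h⟩ => .inr (.inl ⟨y, fun hy => h (by rw [hy])⟩)
  | .inr c => .inr (.inr c)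

theorem bcomp_bcomp_inr_iff {α β γ : Type*} (lA : α → α → Prop) (lB : β → β → Prop)
    (lC : γ → γ → Prop) (a : α) (b : β)
    (u v : {x : {x : α // x ≠ a} ⊕ β // x ≠ Sum.inr b} ⊕ γ) :
    bcomp (bcomp lA lB a) lC (Sum.inr b) u v ↔
      bcomp lA (bcomp lB lC b) a (nestMap a b u) (nestMap a b v) := by
  rcases u with ⟨x | x, hx⟩ | c <;> rcases v with ⟨y | y, hy⟩ | d <;> rfl

theorem stmt4_general {α β γ : Type*}
    [PartialOrder α] [PartialOrder β] [PartialOrder γ] (a : α) (b : β) :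
    ∀ u v : ({x : {x : α // x ≠ a} ⊕ β // x ≠ Sum.inr b} ⊕ γ),
      bcomp (bcomp ((· ≤ ·) : α → α → Prop) ((· ≤ ·) : β → β → Prop) a)
        ((· ≤ ·) : γ → γ → Prop) (Sum.inr b) u v ↔
      bcomp ((· ≤ ·) : α → α → Prop)
        (bcomp ((· ≤ ·) : β → β → Prop) ((· ≤ ·) : γ → γ → Prop) b) a
        (nestMap a b u) (nestMap a b v) :=
  bcomp_bcomp_inr_iff _ _ _ a b

/-- Nested associativity for `•`: `(A •_a B) •_b C = A •_a (B •_b C)`. -/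
theorem stmt4 {α β γ : Type*} [Fintype α] [Fintype β] [Fintype γ]
    [PartialOrder α] [PartialOrder β] [PartialOrder γ] (a : α) (b : β) :
    ∀ u v : ({x : {x : α // x ≠ a} ⊕ β // x ≠ Sum.inr b} ⊕ γ),
      bcomp (bcomp ((· ≤ ·) : α → α → Prop) ((· ≤ ·) : β → β → Prop) a)
        ((· ≤ ·) : γ → γ → Prop) (Sum.inr b) u v ↔
      bcomp ((· ≤ ·) : α → α → Prop)
        (bcomp ((· ≤ ·) : β → β → Prop) ((· ≤ ·) : γ → γ → Prop) b) a
        (nestMap a b u) (nestMap a b v) :=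
  stmt4_general a b
end

section
/- The partial compositions •_a on finite posets satisfy parallel associativity: for finite posets A, B, C with distinct elements a, a' ∈ A, (A •_a B) •_{a'} C = (A •_{a'} C) •_a B as posets on (A \ {a, a'}) ⊔ B ⊔ C. -/
/-- The canonical identification of the underlying set of `(A •_a B) •_{a'} C`
with that of `(A •_{a'} C) •_a B`. -/
def parMap {α β γ : Type*} (a a' : α) (hne : a ≠ a') :
    ({x : {x : α // x ≠ a} ⊕ β // x ≠ Sum.inl ⟨a', hne.symm⟩} ⊕ γ) →
      ({x : {x : α // x ≠ a'} ⊕ γ // x ≠ Sum.inl ⟨a, hne⟩} ⊕ β)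
  | .inl ⟨.inl x, h⟩ =>
      .inl ⟨.inl ⟨x.1, fun hx => h (congrArg Sum.inl (Subtype.ext hx))⟩,
        fun hEq => x.2 (congrArg Subtype.val (Sum.inl.inj hEq))⟩
  | .inl ⟨.inr y, _⟩ => .inr y
  | .inr c => .inl ⟨.inr c, fun h => by cases h⟩

theorem bcomp_bcomp_parMap_iff {α β γ : Type*} (lA : α → α → Prop) (lB : β → β → Prop)
    (lC : γ → γ → Prop) (a a' : α) (hne : a ≠ a')
    (u v : {x : {x : α // x ≠ a} ⊕ β // x ≠ Sum.inl ⟨a', hne.symm⟩} ⊕ γ) :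
    bcomp (bcomp lA lB a) lC (Sum.inl ⟨a', hne.symm⟩) u v ↔
      bcomp (bcomp lA lC a') lB (Sum.inl ⟨a, hne⟩) (parMap a a' hne u) (parMap a a' hne v) := by
  rcases u with ⟨_ | _, _⟩ | _ <;> rcases v with ⟨_ | _, _⟩ | _ <;> exact Iff.rfl

theorem stmt5_general {α β γ : Type*}
    [PartialOrder α] [PartialOrder β] [PartialOrder γ] (a a' : α) (hne : a ≠ a') :
    ∀ u v : ({x : {x : α // x ≠ a} ⊕ β // x ≠ Sum.inl ⟨a', hne.symm⟩} ⊕ γ),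
      bcomp (bcomp ((· ≤ ·) : α → α → Prop) ((· ≤ ·) : β → β → Prop) a)
        ((· ≤ ·) : γ → γ → Prop) (Sum.inl ⟨a', hne.symm⟩) u v ↔
      bcomp (bcomp ((· ≤ ·) : α → α → Prop) ((· ≤ ·) : γ → γ → Prop) a')
        ((· ≤ ·) : β → β → Prop) (Sum.inl ⟨a, hne⟩)
        (parMap a a' hne u) (parMap a a' hne v) :=
  bcomp_bcomp_parMap_iff _ _ _ a a' hne

/-- Parallel associativity for `•`: `(A •_a B) •_{a'} C = (A •_{a'} C) •_a B`. -/
theorem stmt5 {α β γ : Type*} [Fintype α] [Fintype β] [Fintype γ]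
    [PartialOrder α] [PartialOrder β] [PartialOrder γ] (a a' : α) (hne : a ≠ a') :
    ∀ u v : ({x : {x : α // x ≠ a} ⊕ β // x ≠ Sum.inl ⟨a', hne.symm⟩} ⊕ γ),
      bcomp (bcomp ((· ≤ ·) : α → α → Prop) ((· ≤ ·) : β → β → Prop) a)
        ((· ≤ ·) : γ → γ → Prop) (Sum.inl ⟨a', hne.symm⟩) u v ↔
      bcomp (bcomp ((· ≤ ·) : α → α → Prop) ((· ≤ ·) : γ → γ → Prop) a')
        ((· ≤ ·) : β → β → Prop) (Sum.inl ⟨a, hne⟩)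
        (parMap a a' hne u) (parMap a a' hne v) :=
  stmt5_general a a' hne
end

section
/- Every finite WN poset A can be written as A = A_1 ↓ A_2 ↓ ... ↓ A_k, where each A_i is either a singleton or a non-connected poset, and this decomposition is unique. -/
/-- A poset is WN if it has no four-element subposet isomorphic to `N`, the
poset on `{x, y, z, t}` with relations `x < z`, `y < z`, `y < t` only. -/
def IsWN (α : Type*) [PartialOrder α] : Prop :=
  ¬ ∃ x y z t : α, x < z ∧ y < z ∧ y < t ∧
    ¬ x ≤ y ∧ ¬ y ≤ x ∧ ¬ x ≤ t ∧ ¬ t ≤ x ∧ ¬ z ≤ t ∧ ¬ t ≤ z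

/-- The induced subposet on `s` is connected (via its comparability graph). -/
def ConnectedOn {α : Type*} [PartialOrder α] (s : Set α) : Prop :=
  ∀ x ∈ s, ∀ y ∈ s,
    Relation.ReflTransGen (fun u v => u ∈ s ∧ v ∈ s ∧ (u ≤ v ∨ v ≤ u)) x y

/-!
Call `D ⊆ α` a cut if everything in `D` lies below everything outside it. Cuts form a chain, so
the number of cuts missing `x` is a rank for which `α` is the ordinal sum of the level sets. The
blocks of any decomposition into singletons and non-connected posets are exactly these level
sets, since a cut splitting a block would make the block connected. Conversely, if a level set
with two elements were connected, its incomparability graph would be disconnected (the component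
of a minimal element would give a cut splitting it), so the level set would be connected and
co-connected; by Seinsche's theorem its comparability graph then has an induced `P₄`, i.e. `α`
contains an `N`.
-/

namespace SimpleGraph

variable {V : Type*} (G : SimpleGraph V)

def ReachIn (s : Set V) : V → V → Prop :=
  Relation.ReflTransGen fun u v => u ∈ s ∧ v ∈ s ∧ G.Adj u v

def PreconnectedOn (s : Set V) : Prop := ∀ x ∈ s, ∀ y ∈ s, G.ReachIn s x y

def HasInducedP4In (s : Set V) : Prop :=
  ∃ a ∈ s, ∃ b ∈ s, ∃ c ∈ s, ∃ d ∈ s, G.Adj a b ∧ G.Adj b c ∧ G.Adj c d ∧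
    a ≠ c ∧ a ≠ d ∧ b ≠ d ∧ ¬G.Adj a c ∧ ¬G.Adj a d ∧ ¬G.Adj b d

variable {G} {s : Set V} {x y z : V}

namespace ReachIn

theorem trans (h : G.ReachIn s x y) (h' : G.ReachIn s y z) : G.ReachIn s x z :=
  Relation.ReflTransGen.trans h h'

theorem symm (h : G.ReachIn s x y) : G.ReachIn s y x := by
  induction h with
  | refl => exact .refl
  | tail _ hbc ih => exact .head ⟨hbc.2.1, hbc.1, hbc.2.2.symm⟩ ih

theorem adj_of_subset_pair (h : G.ReachIn s x y) (hs : s ⊆ {x, y}) (hxy : x ≠ y) :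
    G.Adj x y := by
  obtain rfl | ⟨w, ⟨-, hw, hxw⟩, -⟩ := h.cases_head
  · exact absurd rfl hxy
  · obtain rfl | rfl := hs hw
    · exact absurd rfl hxw.ne
    · exact hxw

theorem exists_adj_of_ne (h : G.ReachIn s x z) (hxz : x ≠ z) :
    ∃ y ∈ s \ {z}, G.ReachIn (s \ {z}) x y ∧ G.Adj y z := by
  induction h using Relation.ReflTransGen.head_induction_on with
  | refl => exact absurd rfl hxz
  | @head a c hac _ ih =>
    by_cases hcz : c = z
    · exact ⟨a, ⟨hac.1, hxz⟩, .refl, hcz ▸ hac.2.2⟩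
    · obtain ⟨y, hy, hcy, hyz⟩ := ih hcz
      exact ⟨y, hy, .head ⟨⟨hac.1, hxz⟩, ⟨hac.2.1, hcz⟩, hac.2.2⟩ hcy, hyz⟩

theorem exists_adj_crossing {p : V → Prop} (h : G.ReachIn s x y) (hx : ¬p x) (hy : p y) :
    ∃ a b, G.ReachIn s x a ∧ a ∈ s ∧ b ∈ s ∧ G.Adj a b ∧ ¬p a ∧ p b := by
  induction h with
  | refl => exact absurd hy hx
  | @tail b c hxb hbc ih =>
    by_cases hb : p b
    · exact ih hb
    · exact ⟨b, c, hxb, hbc.1, hbc.2.1, hbc.2.2, hb, hy⟩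

end ReachIn

theorem HasInducedP4In.mono {t : Set V} (h : G.HasInducedP4In s) (hst : s ⊆ t) :
    G.HasInducedP4In t := by
  obtain ⟨a, ha, b, hb, c, hc, d, hd, h⟩ := h
  exact ⟨a, hst ha, b, hst hb, c, hst hc, d, hst hd, h⟩

theorem HasInducedP4In.of_compl (h : Gᶜ.HasInducedP4In s) : G.HasInducedP4In s := by
  obtain ⟨a, ha, b, hb, c, hc, d, hd, hab, hbc, hcd, hac, had, hbd, hac', had', hbd'⟩ := h
  have adj_of_not_compl {u w : V} (hne : u ≠ w) (h : ¬Gᶜ.Adj u w) : G.Adj u w := by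
    simpa [compl_adj, hne] using h
  exact ⟨c, hc, a, ha, d, hd, b, hb, (adj_of_not_compl hac hac').symm, adj_of_not_compl had had',
    (adj_of_not_compl hbd hbd').symm, hcd.ne, hbc.ne.symm, hab.ne, fun h => hcd.2 h,
    fun h => hbc.2 h.symm, fun h => hab.2 h⟩

/-- If deleting `v` disconnects `s`, then a non-neighbour of `v` (which exists as `Gᶜ` is
connected on `s`) and a neighbour of `v` in another component span an induced `P₄` through `v`. -/
theorem hasInducedP4In_of_not_preconnectedOn_diff {v : V} (hv : v ∈ s)
    (hG : G.PreconnectedOn s) (hGc : Gᶜ.PreconnectedOn s)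
    (hsv : ¬G.PreconnectedOn (s \ {v})) : G.HasInducedP4In s := by
  obtain ⟨a, ha, b, hb, hab⟩ : ∃ a ∈ s \ {v}, ∃ b ∈ s \ {v}, ¬G.ReachIn (s \ {v}) a b := by
    unfold PreconnectedOn at hsv
    push Not at hsv
    exact hsv
  obtain ⟨u, hu, -, huv⟩ := (hGc a ha.1 v hv).exists_adj_of_ne ha.2
  obtain ⟨c, hc, huc⟩ : ∃ c ∈ s \ {v}, ¬G.ReachIn (s \ {v}) u c := by
    by_cases hua : G.ReachIn (s \ {v}) u a
    · exact ⟨b, hb, fun hub => hab (hua.symm.trans hub)⟩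
    · exact ⟨a, ha, hua⟩
  obtain ⟨y₀, -, huy₀, hy₀v⟩ := (hG u hu.1 v hv).exists_adj_of_ne hu.2
  obtain ⟨x, y, hux, hx, hy, hxy, hxv, hyv⟩ :=
    huy₀.exists_adj_crossing (p := fun w => G.Adj w v) huv.2 hy₀v
  obtain ⟨z, hz, hcz, hzv⟩ := (hG c hc.1 v hv).exists_adj_of_ne hc.2
  have huz : ¬G.ReachIn (s \ {v}) u z := fun h => huc (h.trans hcz.symm)
  have huy : G.ReachIn (s \ {v}) u y := hux.tail ⟨hx, hy, hxy⟩
  exact ⟨x, hx.1, y, hy.1, v, hv, z, hz.1, hxy, hyv, hzv.symm, hx.2,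
    fun e => huz (e ▸ hux), fun e => huz (e ▸ huy), hxv,
    fun h => huz (hux.tail ⟨hx, hz, h⟩), fun h => huz (huy.tail ⟨hy, hz, h⟩)⟩

theorem hasInducedP4In_of_preconnectedOn (hs : s.Finite) (hnt : s.Nontrivial)
    (hG : G.PreconnectedOn s) (hGc : Gᶜ.PreconnectedOn s) : G.HasInducedP4In s := by
  induction s, hs using Set.Finite.induction_on with
  | empty => exact absurd hnt Set.not_nontrivial_empty
  | @insert v t hvt _ ih =>
    have hdiff : insert v t \ {v} = t := Set.insert_sdiff_self_of_notMem hvt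
    by_cases ht : t.Nontrivial
    · by_cases hGt : G.PreconnectedOn t
      · by_cases hGct : Gᶜ.PreconnectedOn t
        · exact (ih ht hGt hGct).mono (Set.subset_insert v t)
        · exact HasInducedP4In.of_compl (hasInducedP4In_of_not_preconnectedOn_diff
            (Set.mem_insert v t) hGc (by rwa [compl_compl]) (by rwa [hdiff]))
      · exact hasInducedP4In_of_not_preconnectedOn_diff (Set.mem_insert v t) hG hGc
          (by rwa [hdiff])
    · obtain ⟨w, hw, hwv⟩ := (Set.nontrivial_iff_exists_ne (Set.mem_insert v t)).1 hnt
      have hsub : insert v t ⊆ {v, w} := by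
        rintro z (rfl | hz)
        · exact Or.inl rfl
        · exact Or.inr (Set.not_nontrivial_iff.1 ht hz (hw.resolve_left hwv))
      exact (((hGc v (Set.mem_insert v t) w hw).adj_of_subset_pair hsub hwv.symm).2
        ((hG v (Set.mem_insert v t) w hw).adj_of_subset_pair hsub hwv.symm)).elim

end SimpleGraph

open SimpleGraph

section Comparability

variable {α : Type*} [PartialOrder α] {s : Set α}

def comparabilityGraph (α : Type*) [PartialOrder α] : SimpleGraph α :=
  fromRel (· ≤ ·)

theorem comparabilityGraph_adj {u v : α} :
    (comparabilityGraph α).Adj u v ↔ u ≠ v ∧ (u ≤ v ∨ v ≤ u) :=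
  fromRel_adj _ u v

theorem compl_comparabilityGraph_adj {u v : α} :
    (comparabilityGraph α)ᶜ.Adj u v ↔ ¬u ≤ v ∧ ¬v ≤ u := by
  rw [compl_adj, comparabilityGraph_adj]
  constructor
  · rintro ⟨hne, h⟩
    exact ⟨fun h' => h ⟨hne, .inl h'⟩, fun h' => h ⟨hne, .inr h'⟩⟩
  · rintro ⟨h₁, h₂⟩
    exact ⟨fun e => h₁ e.le, fun h => h.2.elim h₁ h₂⟩

theorem ConnectedOn.preconnectedOn (h : ConnectedOn s) :
    (comparabilityGraph α).PreconnectedOn s := by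
  intro x hx y hy
  have hxy := h x hx y hy
  clear hy
  induction hxy with
  | refl => exact .refl
  | @tail b c _ hbc ih =>
    by_cases hb : b = c
    · exact hb ▸ ih
    · exact ih.tail ⟨hbc.1, hbc.2.1, comparabilityGraph_adj.2 ⟨hb, hbc.2.2⟩⟩

/-- Consecutive edges of an induced `P₄` `a - b - c - d` of the comparability graph cannot point
the same way (transitivity would relate `a, c` or `b, d`), so they alternate and form an `N`. -/
theorem IsWN.not_hasInducedP4In (hWN : IsWN α) (s : Set α) :
    ¬(comparabilityGraph α).HasInducedP4In s := by
  rintro ⟨a, -, b, -, c, -, d, -, hab, hbc, hcd, hac, had, hbd, hac', had', hbd'⟩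
  have incomp {u w : α} (hne : u ≠ w) (h : ¬(comparabilityGraph α).Adj u w) :
      ¬u ≤ w ∧ ¬w ≤ u :=
    compl_comparabilityGraph_adj.1 ((compl_adj _ u w).2 ⟨hne, h⟩)
  obtain ⟨hac₁, hac₂⟩ := incomp hac hac'
  obtain ⟨had₁, had₂⟩ := incomp had had'
  obtain ⟨hbd₁, hbd₂⟩ := incomp hbd hbd'
  rw [comparabilityGraph_adj] at hab hbc hcd
  rcases hab.2 with h₁ | h₁ <;> rcases hbc.2 with h₂ | h₂
  · exact hac₁ (h₁.trans h₂)
  · rcases hcd.2 with h₃ | h₃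
    · exact hWN ⟨a, c, b, d, h₁.lt_of_ne hab.1, h₂.lt_of_ne hbc.1.symm, h₃.lt_of_ne hcd.1,
        hac₁, hac₂, had₁, had₂, hbd₁, hbd₂⟩
    · exact hbd₂ (h₃.trans h₂)
  · rcases hcd.2 with h₃ | h₃
    · exact hbd₁ (h₂.trans h₃)
    · exact hWN ⟨d, b, c, a, h₃.lt_of_ne hcd.1.symm, h₂.lt_of_ne hbc.1, h₁.lt_of_ne hab.1.symm,
        hbd₂, hbd₁, had₂, had₁, hac₂, hac₁⟩
  · exact hac₂ (h₂.trans h₁)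

theorem le_of_reachIn_compl_comparabilityGraph {m x y : α} (hm : Minimal (· ∈ s) m)
    (hx : (comparabilityGraph α)ᶜ.ReachIn s m x) (hy : y ∈ s)
    (hmy : ¬(comparabilityGraph α)ᶜ.ReachIn s m y) : x ≤ y := by
  have comparable {z : α} (hz : z ∈ s) (hmz : (comparabilityGraph α)ᶜ.ReachIn s m z) :
      z ≤ y ∨ y ≤ z := by
    by_contra h
    push Not at h
    exact hmy (hmz.tail ⟨hz, hy, compl_comparabilityGraph_adj.2 h⟩)
  induction hx with
  | refl =>
    refine (comparable hm.prop .refl).resolve_right fun hym => hmy ?_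
    obtain rfl : y = m := hym.eq_of_not_lt (hm.not_lt hy)
    exact .refl
  | @tail b c hmb hbc ih =>
    refine (comparable hbc.2.1 (hmb.tail hbc)).resolve_right fun hyc => ?_
    exact (compl_comparabilityGraph_adj.1 hbc.2.2).1 (ih.trans hyc)

end Comparability

section Cut

variable {α : Type*} [PartialOrder α]

def IsCut (D : Set α) : Prop := ∀ x ∈ D, ∀ y ∉ D, x ≤ y

theorem IsCut.subset_or_subset {D E : Set α} (hD : IsCut D) (hE : IsCut E) :
    D ⊆ E ∨ E ⊆ D := by
  by_contra h
  obtain ⟨x, hxD, hxE⟩ := Set.not_subset.1 (not_or.1 h).1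
  obtain ⟨y, hyE, hyD⟩ := Set.not_subset.1 (not_or.1 h).2
  exact hxE (le_antisymm (hD x hxD y hyD) (hE y hyE x hxE) ▸ hyE)

theorem IsCut.connectedOn {D s : Set α} (hD : IsCut D) {x y : α} (hx : x ∈ s) (hxD : x ∈ D)
    (hy : y ∈ s) (hyD : y ∉ D) : ConnectedOn s := by
  intro u hu w hw
  by_cases huD : u ∈ D <;> by_cases hwD : w ∈ D
  · exact .tail (.single ⟨hu, hy, .inl (hD u huD y hyD)⟩) ⟨hy, hw, .inr (hD w hwD y hyD)⟩
  · exact .single ⟨hu, hw, .inl (hD u huD w hwD)⟩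
  · exact .single ⟨hu, hw, .inr (hD w hwD u huD)⟩
  · exact .tail (.single ⟨hu, hx, .inr (hD x hxD u huD)⟩) ⟨hx, hw, .inl (hD x hxD w hwD)⟩

variable [Finite α] {x y : α}

noncomputable def cutRank (x : α) : ℕ := {D : Set α | IsCut D ∧ x ∉ D}.ncard

theorem IsCut.cutRank_lt {D : Set α} (hD : IsCut D) (hx : x ∈ D) (hy : y ∉ D) :
    cutRank x < cutRank y := by
  refine Set.ncard_lt_ncard ⟨fun E ⟨hE, hxE⟩ => ⟨hE, fun hyE => ?_⟩, fun h => (h ⟨hD, hy⟩).2 hx⟩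
    (Set.toFinite _)
  rcases hD.subset_or_subset hE with h | h
  · exact hxE (h hx)
  · exact hy (h hyE)

theorem cutRank_lt_iff : cutRank x < cutRank y ↔ ∃ D, IsCut D ∧ x ∈ D ∧ y ∉ D := by
  refine ⟨fun h => ?_, fun ⟨D, hD, hx, hy⟩ => hD.cutRank_lt hx hy⟩
  by_contra hc
  push Not at hc
  exact h.not_ge (Set.ncard_le_ncard (fun E ⟨hE, hyE⟩ => ⟨hE, fun hxE => hyE (hc E hE hxE)⟩)
    (Set.toFinite _))

theorem le_of_cutRank_lt (h : cutRank x < cutRank y) : x ≤ y := by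
  obtain ⟨D, hD, hx, hy⟩ := cutRank_lt_iff.1 h
  exact hD x hx y hy

theorem cutRank_mono : Monotone (cutRank (α := α)) := fun x y hxy => by
  by_contra h
  obtain rfl := le_antisymm hxy (le_of_cutRank_lt (not_le.1 h))
  exact h le_rfl

theorem cutRank_eq_of_not_connectedOn {s : Set α} (hs : ¬ConnectedOn s) (hx : x ∈ s)
    (hy : y ∈ s) : cutRank x = cutRank y := by
  by_contra hne
  rcases lt_or_gt_of_ne hne with h | h
  · obtain ⟨D, hD, hxD, hyD⟩ := cutRank_lt_iff.1 h
    exact hs (hD.connectedOn hx hxD hy hyD)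
  · obtain ⟨D, hD, hyD, hxD⟩ := cutRank_lt_iff.1 h
    exact hs (hD.connectedOn hy hyD hx hxD)

theorem isCut_cutRank_lt_union {v : ℕ} {E : Set α} (hE : E ⊆ cutRank ⁻¹' {v})
    (hsplit : ∀ x ∈ E, ∀ y ∈ cutRank ⁻¹' {v}, y ∉ E → x ≤ y) :
    IsCut ({x | cutRank x < v} ∪ E) := by
  rintro x hx y hy
  obtain ⟨hyv, hyE⟩ := not_or.1 hy
  replace hyv : v ≤ cutRank y := not_lt.1 hyv
  rcases hx with hx | hx
  · exact le_of_cutRank_lt (hx.trans_le hyv)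
  · rcases hyv.lt_or_eq with hlt | heq
    · exact le_of_cutRank_lt ((hE hx).trans_lt hlt)
    · exact hsplit x hx y heq.symm hyE

theorem IsWN.cutRank_fiber_eq_singleton_or_not_connectedOn (hWN : IsWN α) (x : α) :
    (∃ y, (cutRank ⁻¹' {cutRank x} : Set α) = {y}) ∨
      ¬ConnectedOn (cutRank ⁻¹' {cutRank x} : Set α) := by
  set s : Set α := cutRank ⁻¹' {cutRank x}
  by_cases hs : s.Nontrivial
  · refine .inr fun hconn => ?_
    have hco : ¬(comparabilityGraph α)ᶜ.PreconnectedOn s := fun hco =>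
      hWN.not_hasInducedP4In s
        (hasInducedP4In_of_preconnectedOn s.toFinite hs hconn.preconnectedOn hco)
    obtain ⟨m, hm⟩ := s.toFinite.exists_minimal hs.nonempty
    obtain ⟨w, hw, hmw⟩ : ∃ w ∈ s, ¬(comparabilityGraph α)ᶜ.ReachIn s m w := by
      by_contra h
      push Not at h
      exact hco fun p hp q hq => (h p hp).symm.trans (h q hq)
    have hcut := isCut_cutRank_lt_union (E := {z ∈ s | (comparabilityGraph α)ᶜ.ReachIn s m z})
      (fun z hz => hz.1) fun z hz y hy hyE =>
        le_of_reachIn_compl_comparabilityGraph hm hz.2 hy fun h => hyE ⟨hy, h⟩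
    refine (hcut.cutRank_lt (.inr ⟨hm.prop, .refl⟩) ?_).ne (hm.prop.trans hw.symm)
    rintro (h | h)
    · exact h.ne hw
    · exact hmw h.2
  · exact .inl ⟨x, (Set.not_nontrivial_iff.1 hs).eq_singleton_of_mem rfl⟩

end Cut

section LevelList

variable {α : Type*} {f : α → ℕ} {L : List (Set α)}

structure IsLevelList (f : α → ℕ) (L : List (Set α)) : Prop where
  nonempty : ∀ s ∈ L, s.Nonempty
  exists_mem : ∀ x, ∃ s ∈ L, x ∈ s
  eq_of_mem : ∀ s ∈ L, ∀ x ∈ s, ∀ y ∈ s, f x = f y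
  pairwise_lt : L.Pairwise fun s t => ∀ x ∈ s, ∀ y ∈ t, f x < f y

noncomputable def fiberList [Fintype α] (f : α → ℕ) : List (Set α) :=
  (Finset.univ.image f).sort.map fun v => f ⁻¹' {v}

theorem mem_fiberList [Fintype α] {s : Set α} : s ∈ fiberList f ↔ ∃ x, f ⁻¹' {f x} = s := by
  simp [fiberList]

theorem isLevelList_fiberList [Fintype α] (f : α → ℕ) : IsLevelList f (fiberList f) := by
  refine ⟨?_, fun x => ⟨_, mem_fiberList.2 ⟨x, rfl⟩, rfl⟩, ?_, ?_⟩
  · intro s hs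
    obtain ⟨x, rfl⟩ := mem_fiberList.1 hs
    exact ⟨x, rfl⟩
  · intro s hs x hx y hy
    obtain ⟨z, rfl⟩ := mem_fiberList.1 hs
    exact hx.trans hy.symm
  · refine List.pairwise_map.2 ((Finset.sortedLT_sort _).pairwise.imp ?_)
    intro v w hvw x hx y hy
    rwa [hx, hy]

theorem IsLevelList.eq_fiberList [Fintype α] (h : IsLevelList f L) : L = fiberList f := by
  obtain ⟨hne, hcover, hconst, hlt⟩ := h
  let level (s : Set α) : ℕ := sInf (f '' s)
  have level_eq {s} (hs : s ∈ L) {x} (hx : x ∈ s) : level s = f x := by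
    have : f '' s = {f x} := Set.eq_singleton_iff_unique_mem.2
      ⟨Set.mem_image_of_mem f hx, by rintro _ ⟨y, hy, rfl⟩; exact hconst s hs y hy x hx⟩
    simp only [level, this, csInf_singleton]
  have hsorted : (L.map level).SortedLT := by
    refine List.sortedLT_iff_pairwise.2 (List.pairwise_map.2 (hlt.imp_of_mem ?_))
    intro s t hs ht hst
    obtain ⟨x, hx⟩ := hne s hs
    obtain ⟨y, hy⟩ := hne t ht
    rw [level_eq hs hx, level_eq ht hy]
    exact hst x hx y hy
  have hfiber : ∀ s ∈ L, f ⁻¹' {level s} = s := by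
    intro s hs
    ext x
    refine ⟨fun hx => ?_, fun hx => (level_eq hs hx).symm⟩
    obtain ⟨t, ht, hxt⟩ := hcover x
    obtain rfl : t = s := List.inj_on_of_nodup_map hsorted.nodup ht hs
      ((level_eq ht hxt).trans hx)
    exact hxt
  have hlevels : L.map level = (Finset.univ.image f).sort := by
    refine hsorted.eq_of_mem_iff (Finset.sortedLT_sort _) fun v => ?_
    simp only [List.mem_map, Finset.mem_sort, Finset.mem_image, Finset.mem_univ, true_and]
    constructor
    · rintro ⟨s, hs, rfl⟩
      obtain ⟨x, hx⟩ := hne s hs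
      exact ⟨x, (level_eq hs hx).symm⟩
    · rintro ⟨x, rfl⟩
      obtain ⟨s, hs, hx⟩ := hcover x
      exact ⟨s, hs, level_eq hs hx⟩
  calc L = (L.map level).map fun v => f ⁻¹' {v} := by
        rw [List.map_map]
        exact ((List.map_congr_left hfiber).trans (List.map_id' L)).symm
    _ = fiberList f := by rw [hlevels, fiberList]

theorem IsLevelList.pairwise_disjoint (h : IsLevelList f L) : L.Pairwise Disjoint :=
  h.pairwise_lt.imp fun hst => Set.disjoint_left.2 fun x hxs hxt => (hst x hxs x hxt).false

end LevelList

section OrdinalSum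

variable {α : Type*} [PartialOrder α] {L : List (Set α)}

def IsOrdinalSum (L : List (Set α)) : Prop :=
  ∀ x y : α, x ≤ y ↔ ∃ i j : Fin L.length,
    x ∈ L.get i ∧ y ∈ L.get j ∧ ((i : ℕ) < (j : ℕ) ∨ (i = j ∧ x ≤ y))

theorem IsLevelList.isOrdinalSum {f : α → ℕ} (h : IsLevelList f L) (hmono : Monotone f)
    (hle : ∀ {x y}, f x < f y → x ≤ y) : IsOrdinalSum L := by
  have hlt := List.pairwise_iff_get.1 h.pairwise_lt
  intro x y
  refine ⟨fun hxy => ?_, ?_⟩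
  · obtain ⟨s, hs, hx⟩ := h.exists_mem x
    obtain ⟨i, rfl⟩ := List.mem_iff_get.1 hs
    obtain ⟨t, ht, hy⟩ := h.exists_mem y
    obtain ⟨j, rfl⟩ := List.mem_iff_get.1 ht
    refine ⟨i, j, hx, hy, ?_⟩
    rcases lt_trichotomy i j with hij | rfl | hji
    · exact .inl hij
    · exact .inr ⟨rfl, hxy⟩
    · exact ((hlt j i hji y hy x hx).not_ge (hmono hxy)).elim
  · rintro ⟨i, j, hx, hy, hij | ⟨-, hxy⟩⟩
    · exact hle (hlt i j hij x hx y hy)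
    · exact hxy

theorem IsOrdinalSum.isCut_prefix (h : IsOrdinalSum L) (hcover : ∀ x, ∃ s ∈ L, x ∈ s)
    (i : Fin L.length) : IsCut {x | ∃ k ≤ i, x ∈ L.get k} := by
  rintro x ⟨k, hki, hx⟩ y hy
  obtain ⟨t, ht, hyt⟩ := hcover y
  obtain ⟨l, rfl⟩ := List.mem_iff_get.1 ht
  have hil : i < l := lt_of_not_ge fun hli => hy ⟨l, hli, hyt⟩
  exact (h x y).2 ⟨k, l, hx, hyt, .inl (hki.trans_lt hil)⟩

theorem IsOrdinalSum.isLevelList_cutRank [Finite α] (hsum : IsOrdinalSum L)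
    (hne : ∀ s ∈ L, s.Nonempty) (hdisj : L.Pairwise Disjoint) (hcover : ∀ x, ∃ s ∈ L, x ∈ s)
    (hblocks : ∀ s ∈ L, (∃ x, s = {x}) ∨ ¬ConnectedOn s) : IsLevelList cutRank L := by
  refine ⟨hne, hcover, fun s hs x hx y hy => ?_,
    List.pairwise_iff_get.2 fun i j hij x hx y hy => ?_⟩
  · rcases hblocks s hs with ⟨z, rfl⟩ | hconn
    · rw [Set.mem_singleton_iff.1 hx, Set.mem_singleton_iff.1 hy]
    · exact cutRank_eq_of_not_connectedOn hconn hx hy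
  · refine (hsum.isCut_prefix hcover i).cutRank_lt ⟨i, le_rfl, hx⟩ ?_
    rintro ⟨k, hki, hyk⟩
    exact Set.disjoint_left.1 (List.pairwise_iff_get.1 hdisj k j (hki.trans_lt hij)) hyk hy

end OrdinalSum

theorem stmt14_general {α : Type*} [Fintype α] [PartialOrder α]
    (hWN : IsWN α) :
    ∃! L : List (Set α),
      (∀ s ∈ L, s.Nonempty) ∧
      L.Pairwise (fun s t => Disjoint s t) ∧
      (∀ x : α, ∃ s ∈ L, x ∈ s) ∧
      (∀ x y : α, x ≤ y ↔ ∃ i j : Fin L.length,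
        x ∈ L.get i ∧ y ∈ L.get j ∧ ((i : ℕ) < (j : ℕ) ∨ (i = j ∧ x ≤ y))) ∧
      (∀ s ∈ L, (∃ x, s = {x}) ∨ ¬ ConnectedOn s) := by
  have hlevels := isLevelList_fiberList (cutRank (α := α))
  refine ⟨fiberList cutRank, ⟨hlevels.nonempty, hlevels.pairwise_disjoint, hlevels.exists_mem,
    hlevels.isOrdinalSum cutRank_mono le_of_cutRank_lt, fun s hs => ?_⟩, ?_⟩
  · obtain ⟨x, rfl⟩ := mem_fiberList.1 hs
    exact hWN.cutRank_fiber_eq_singleton_or_not_connectedOn x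
  · rintro L ⟨hne, hdisj, hcover, hsum, hblocks⟩
    exact (IsOrdinalSum.isLevelList_cutRank hsum hne hdisj hcover hblocks).eq_fiberList

/-- Every finite WN poset decomposes uniquely as `A = A₁ ↓ ⋯ ↓ A_k`, where each
`A_i` is a singleton or a non-connected poset. The decomposition is encoded by
the ordered list of the (nonempty, pairwise disjoint, covering) blocks
`A₁, …, A_k`, the order of `A` being the ordinal sum along the list. -/
theorem stmt14 {α : Type*} [Fintype α] [PartialOrder α] [Nonempty α]
    (hWN : IsWN α) :
    ∃! L : List (Set α),
      (∀ s ∈ L, s.Nonempty) ∧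
      L.Pairwise (fun s t => Disjoint s t) ∧
      (∀ x : α, ∃ s ∈ L, x ∈ s) ∧
      (∀ x y : α, x ≤ y ↔ ∃ i j : Fin L.length,
        x ∈ L.get i ∧ y ∈ L.get j ∧ ((i : ℕ) < (j : ℕ) ∨ (i = j ∧ x ≤ y))) ∧
      (∀ s ∈ L, (∃ x, s = {x}) ∨ ¬ ConnectedOn s) :=
  stmt14_general hWN
end

section
/- Let A and B be finite posets. Then A ↓ B is WN if and only if both A and B are WN. -/
/-- A relation (thought of as a partial order) is WN if it has no four-element
subposet isomorphic to `N`, the poset on `{x, y, z, t}` with relations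
`x < z`, `y < z`, `y < t` only. Here `u < v` means `r u v ∧ ¬ r v u`. -/
def IsWNRel {γ : Type*} (r : γ → γ → Prop) : Prop :=
  ¬ ∃ x y z t : γ,
    (r x z ∧ ¬ r z x) ∧ (r y z ∧ ¬ r z y) ∧ (r y t ∧ ¬ r t y) ∧
    ¬ r x y ∧ ¬ r y x ∧ ¬ r x t ∧ ¬ r t x ∧ ¬ r z t ∧ ¬ r t z

/-- The ordinal sum `A ↓ B` on `A ⊔ B`. -/
def osum {α β : Type*} (lA : α → α → Prop) (lB : β → β → Prop) :
    (α ⊕ β) → (α ⊕ β) → Prop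
  | .inl x, .inl y => lA x y
  | .inr x, .inr y => lB x y
  | .inl _, .inr _ => True
  | .inr _, .inl _ => False

theorem IsWNRel.comap {γ δ : Type*} {r : δ → δ → Prop} (f : γ → δ) (h : IsWNRel r) :
    IsWNRel (fun a b => r (f a) (f b)) := by
  rintro ⟨x, y, z, t, hN⟩
  exact h ⟨f x, f y, f z, f t, hN⟩

section OrdinalSum

variable {α β : Type*} {lA : α → α → Prop} {lB : β → β → Prop}

theorem IsWNRel.of_osum_left (h : IsWNRel (osum lA lB)) : IsWNRel lA :=
  h.comap Sum.inl

theorem IsWNRel.of_osum_right (h : IsWNRel (osum lA lB)) : IsWNRel lB :=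
  h.comap Sum.inr

theorem IsWNRel.osum (hA : IsWNRel lA) (hB : IsWNRel lB) : IsWNRel (osum lA lB) := by
  rintro ⟨x, y, z, t, hN⟩
  -- Points in different summands are always comparable, and the incomparable pairs
  -- `x, y`, `x, t`, `z, t` connect all four points, so the `N` lies in a single summand.
  cases x <;> cases y <;> cases z <;> cases t <;> simp [_root_.osum] at hN
  · exact hA ⟨_, _, _, _, hN⟩
  · exact hB ⟨_, _, _, _, hN⟩

theorem isWNRel_osum_iff : IsWNRel (osum lA lB) ↔ IsWNRel lA ∧ IsWNRel lB :=
  ⟨fun h => ⟨h.of_osum_left, h.of_osum_right⟩, fun ⟨hA, hB⟩ => hA.osum hB⟩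

end OrdinalSum

theorem stmt15_general {α β : Type*} [PartialOrder α] [PartialOrder β] :
    IsWNRel (osum ((· ≤ ·) : α → α → Prop) ((· ≤ ·) : β → β → Prop)) ↔
      IsWNRel ((· ≤ ·) : α → α → Prop) ∧ IsWNRel ((· ≤ ·) : β → β → Prop) :=
  isWNRel_osum_iff

/-- `A ↓ B` is WN iff both `A` and `B` are WN. -/
theorem stmt15 {α β : Type*} [Fintype α] [Fintype β] [PartialOrder α] [PartialOrder β] :
    IsWNRel (osum ((· ≤ ·) : α → α → Prop) ((· ≤ ·) : β → β → Prop)) ↔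
      IsWNRel ((· ≤ ·) : α → α → Prop) ∧ IsWNRel ((· ≤ ·) : β → β → Prop) :=
  stmt15_general
end

section
/- Let A and B be finite WN posets, and a ∈ A. Then the poset A •_a B (substitution of B at the vertex a) is WN. -/
/-- The strict order of `N`, with `x, y, z, t` numbered `0, 1, 2, 3`. -/
def nRel (i j : Fin 4) : Prop :=
  (i = 0 ∧ j = 2) ∨ (i = 1 ∧ j = 2) ∨ (i = 1 ∧ j = 3)

instance : DecidableRel nRel := fun _ _ => by unfold nRel; infer_instance

def IsNCopy {γ : Type*} (r : γ → γ → Prop) (f : Fin 4 → γ) : Prop :=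
  ∀ i j, i ≠ j → (r (f i) (f j) ↔ nRel i j)

theorem isWNRel_iff_forall_not_isNCopy {γ : Type*} {r : γ → γ → Prop} :
    IsWNRel r ↔ ∀ f, ¬ IsNCopy r f := by
  constructor
  · rintro h f hf
    unfold IsNCopy at hf
    exact h ⟨f 0, f 1, f 2, f 3, by simp (disch := decide) [hf, nRel]⟩
  · rintro h ⟨x, y, z, t, hN⟩
    refine h ![x, y, z, t] fun i j hij => ?_
    fin_cases i <;> fin_cases j <;> simp_all [nRel]

/-- `p` is a module of `r`: no vertex outside `p` distinguishes two vertices of `p`. -/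
def IsModule {γ : Type*} (r : γ → γ → Prop) (p : γ → Prop) : Prop :=
  ∀ ⦃u v w⦄, p u → p v → ¬ p w → (r u w ↔ r v w) ∧ (r w u ↔ r w v)

theorem IsNCopy.isModule_comp {γ : Type*} {r : γ → γ → Prop} {f : Fin 4 → γ}
    (hf : IsNCopy r f) {p : γ → Prop} (hp : IsModule r p) : IsModule nRel (p ∘ f) := by
  intro u v w hu hv hw
  have hwu : w ≠ u := fun h => hw (h ▸ hu)
  have hwv : w ≠ v := fun h => hw (h ▸ hv)
  rw [← hf _ _ hwu.symm, ← hf _ _ hwv.symm, ← hf _ _ hwu, ← hf _ _ hwv]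
  exact hp hu hv hw

theorem nRel_isModule_trivial (s : Fin 4 → Bool) (hs : IsModule nRel (s · = true)) :
    (∀ i, s i) ∨ ∀ i j, s i → s j → i = j := by
  revert s
  unfold IsModule
  decide

section Substitution

variable {α β : Type*} {lA : α → α → Prop} {lB : β → β → Prop} {a : α}

theorem isModule_bcomp_isRight :
    IsModule (bcomp lA lB a) (fun u => u.isRight) := by
  rintro (u | u) (v | v) (w | w) <;> simp [bcomp]

def bcompCollapse (a : α) : {x : α // x ≠ a} ⊕ β → α :=
  Sum.elim Subtype.val fun _ => a

theorem bcomp_iff_bcompCollapse {u v : {x : α // x ≠ a} ⊕ β}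
    (huv : ¬ (u.isRight ∧ v.isRight)) :
    bcomp lA lB a u v ↔ lA (bcompCollapse a u) (bcompCollapse a v) := by
  cases u <;> cases v <;> simp_all [bcomp, bcompCollapse]

theorem isWNRel_bcomp (hA : IsWNRel lA) (hB : IsWNRel lB) : IsWNRel (bcomp lA lB a) := by
  rw [isWNRel_iff_forall_not_isNCopy] at *
  intro f hf
  rcases nRel_isModule_trivial _ (hf.isModule_comp isModule_bcomp_isRight) with hall | hsingleton
  · choose g hg using fun i => Sum.isRight_iff.mp (hall i)
    refine hB g fun i j hij => ?_
    simpa [hg, bcomp] using hf i j hij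
  · refine hA (bcompCollapse a ∘ f) fun i j hij => ?_
    have hnot : ¬ ((f i).isRight ∧ (f j).isRight) := fun h => hij (hsingleton i j h.1 h.2)
    exact (bcomp_iff_bcompCollapse (lB := lB) hnot).symm.trans (hf i j hij)

end Substitution

theorem stmt17_general {α β : Type*} [PartialOrder α] [PartialOrder β]
    (hA : IsWNRel ((· ≤ ·) : α → α → Prop)) (hB : IsWNRel ((· ≤ ·) : β → β → Prop))
    (a : α) :
    IsWNRel (bcomp ((· ≤ ·) : α → α → Prop) ((· ≤ ·) : β → β → Prop) a) :=
  isWNRel_bcomp hA hB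

/-- If `A` and `B` are finite WN posets and `a ∈ A`, then `A •_a B` is WN. -/
theorem stmt17 {α β : Type*} [Fintype α] [Fintype β] [PartialOrder α] [PartialOrder β]
    (hA : IsWNRel ((· ≤ ·) : α → α → Prop)) (hB : IsWNRel ((· ≤ ·) : β → β → Prop))
    (a : α) :
    IsWNRel (bcomp ((· ≤ ·) : α → α → Prop) ((· ≤ ·) : β → β → Prop) a) :=
  stmt17_general hA hB a
end

section
/- Let A be a finite connected poset with at least two maximal elements that is WN. Define A' = {x ∈ A : x ≤ M for all maximal elements M of A} and A'' = A \ A'. Then A' and A'' are nonempty, every minimal element of A lies in A', every maximal element lies in A'', and A = A' ↓ A'' (every element of A' is below every element of A''). -/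
theorem isMax_iff_forall_le_imp_eq {α : Type*} [PartialOrder α] {a : α} :
    IsMax a ↔ ∀ b, a ≤ b → b = a :=
  ⟨fun h _ hb => (h.eq_of_le hb).symm, fun h b hb => (h b hb).le⟩

theorem isMin_iff_forall_le_imp_eq {α : Type*} [PartialOrder α] {a : α} :
    IsMin a ↔ ∀ b, b ≤ a → b = a :=
  ⟨fun h _ hb => h.eq_of_le hb, fun h b hb => (h b hb).ge⟩

theorem Finite.exists_le_isMax {α : Type*} [PartialOrder α] [Finite α] (a : α) :
    ∃ m, a ≤ m ∧ IsMax m := by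
  simpa using Set.finite_univ.exists_le_maximal (Set.mem_univ a)

namespace IsWN

variable {α : Type*} [PartialOrder α]

theorem le_or_le_of_isMax (hWN : IsWN α) {x y z m : α} (hxz : x ≤ z) (hyz : y ≤ z)
    (hym : y ≤ m) (hm : IsMax m) : x ≤ m ∨ y ≤ x := by
  refine or_iff_not_imp_left.2 fun hxm => ?_
  by_contra hyx
  have hxz' : x < z := hxz.lt_of_ne (by rintro rfl; exact hyx hyz)
  have hyz' : y < z := hyz.lt_of_ne (by rintro rfl; exact hxm (hxz.trans hym))
  have hym' : y < m := hym.lt_of_ne (by rintro rfl; exact hyz'.not_ge (hm hyz'.le))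
  exact hWN ⟨x, y, z, m, hxz', hyz', hym', fun h => hxm (h.trans hym), hyx, hxm,
    fun h => hxm (hm h), fun h => hxm (hxz.trans h), fun h => hxm (hxz.trans (hm h))⟩

theorem le_of_isMin_of_reflTransGen [Finite α] (hWN : IsWN α) {a x m : α} (ha : IsMin a)
    (hpath : Relation.ReflTransGen (fun u v => u ≤ v ∨ v ≤ u) a x) (hm : IsMax m)
    (hxm : x ≤ m) : a ≤ m := by
  induction hpath generalizing m with
  | refl => exact hxm
  | @tail b c _ hbc ih =>
    rcases hbc with hbc | hcb
    · exact ih hm (hbc.trans hxm)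
    · obtain ⟨p, hbp, hp⟩ := Finite.exists_le_isMax b
      rcases hWN.le_or_le_of_isMax (ih hp hbp) (hcb.trans hbp) hxm hm with ham | hca
      · exact ham
      · exact ha.eq_of_le hca ▸ hxm

theorem le_of_forall_isMax_le [Finite α] (hWN : IsWN α) {x y : α}
    (hx : ∀ m, IsMax m → x ≤ m) (hy : ¬ ∀ m, IsMax m → y ≤ m) : x ≤ y := by
  obtain ⟨m, hm, hym⟩ := not_forall₂.1 hy
  obtain ⟨n, hyn, hn⟩ := Finite.exists_le_isMax y
  exact (hWN.le_or_le_of_isMax hyn (hx n hn) (hx m hm) hm).resolve_left hym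

end IsWN

/-- Let `A` be a finite connected WN poset with at least two maximal elements,
and `A' = {x : x ≤ M for every maximal M}`, `A'' = A \ A'`. Then `A'` and `A''`
are nonempty, minimal elements lie in `A'`, maximal elements lie in `A''`, and
`A = A' ↓ A''`. -/
theorem stmt19 {α : Type*} [Fintype α] [PartialOrder α]
    (hconn : ∀ x y : α, Relation.ReflTransGen (fun u v => u ≤ v ∨ v ≤ u) x y)
    (hWN : IsWN α)
    (hmax : ∃ M M' : α, M ≠ M' ∧ (∀ z, M ≤ z → z = M) ∧ (∀ z, M' ≤ z → z = M')) :
    ({x : α | ∀ M, (∀ z, M ≤ z → z = M) → x ≤ M}).Nonempty ∧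
    ({x : α | ∀ M, (∀ z, M ≤ z → z = M) → x ≤ M})ᶜ.Nonempty ∧
    (∀ x : α, (∀ z, z ≤ x → z = x) → x ∈ {x : α | ∀ M, (∀ z, M ≤ z → z = M) → x ≤ M}) ∧
    (∀ x : α, (∀ z, x ≤ z → z = x) → x ∉ {x : α | ∀ M, (∀ z, M ≤ z → z = M) → x ≤ M}) ∧
    (∀ x ∈ {x : α | ∀ M, (∀ z, M ≤ z → z = M) → x ≤ M},
      ∀ y ∉ {x : α | ∀ M, (∀ z, M ≤ z → z = M) → x ≤ M}, x ≤ y) := by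
  obtain ⟨M, M', hMM', hM, hM'⟩ := hmax
  simp only [← isMax_iff_forall_le_imp_eq, ← isMin_iff_forall_le_imp_eq] at hM hM' ⊢
  have min_le_max : ∀ a, IsMin a → ∀ m, IsMax m → a ≤ m := fun a ha m hm =>
    hWN.le_of_isMin_of_reflTransGen ha (hconn a m) hm le_rfl
  have max_not_le_max : ∀ x, IsMax x → ¬ ∀ m, IsMax m → x ≤ m := fun x hx h =>
    hMM' ((hx.eq_of_le (h M hM)).symm.trans (hx.eq_of_le (h M' hM')))
  obtain ⟨a, ha⟩ : ∃ a : α, IsMin a := by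
    simpa using Set.finite_univ.exists_minimal ⟨M, Set.mem_univ M⟩
  exact ⟨⟨a, min_le_max a ha⟩, ⟨M, max_not_le_max M hM⟩, min_le_max, max_not_le_max,
    fun _ hx _ hy => hWN.le_of_forall_isMax_le hx hy⟩
end
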